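/- The operator R = R₂₃₂ on V^{⊗3}, V = ℂ², is invertible and satisfies R + R^{−1} = √2·Id_{V^{⊗3}}, and its partial operator traces satisfy Sp_{3,2}(R) = 2√2·Id_V and Sp_{3,2}(R^{−1}) = 2√2·Id_V. -/

import Mathlib

open scoped BigOperators
open Matrix

/-- Endomorphisms of `V^{⊗n}`, `dim V = d`, as multi-indexed matrices. -/
abbrev MIM (d n : ℕ) := Matrix (Fin n → Fin d) (Fin n → Fin d) ℂ

/-- Kronecker (tensor) product of multi-indexed matrices. -/
noncomputable def mtens {d a b : ℕ} (f : MIM d a) (g : MIM d b) : MIM d (a + b) :=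
  fun i j =>
    f (fun x => i (Fin.castAdd b x)) (fun x => j (Fin.castAdd b x)) *
    g (fun x => i (Fin.natAdd a x)) (fun x => j (Fin.natAdd a x))

/-- Partial operator trace `Sp_{p+m,m}` over the last `m` tensor factors. -/
noncomputable def pTr {d : ℕ} (p m : ℕ) (f : MIM d (p + m)) : MIM d p :=
  fun i j => ∑ l : Fin m → Fin d, f (Fin.append i l) (Fin.append j l)

/-- Kronecker power `μ^{⊗ n}`. -/
noncomputable def mpow {d : ℕ} (μ : Matrix (Fin d) (Fin d) ℂ) (n : ℕ) : MIM d n :=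
  fun i j => ∏ x : Fin n, μ (i x) (j x)

/-- Transport a multi-indexed matrix along an equality of the number of factors. -/
noncomputable def recast {d a b : ℕ} (h : a = b) (f : MIM d a) : MIM d b :=
  Matrix.reindex (Equiv.arrowCongr (finCongr h) (Equiv.refl (Fin d)))
    (Equiv.arrowCongr (finCongr h) (Equiv.refl (Fin d))) f

/-- `R_i = I_m^{⊗(i-1)} ⊗ R ⊗ I_m^{⊗(n-i-1)}` acting on `V^{⊗(k+m(n-2))}`
(zero-based index `i : Fin (n-1)`). -/
noncomputable def Rop (d k m n : ℕ) (R : MIM d k) (i : Fin (n - 1)) : MIM d (k + m * (n - 2)) :=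
  fun a b =>
    if ∀ x : Fin (k + m * (n - 2)),
        ((x : ℕ) < m * (i : ℕ) ∨ m * (i : ℕ) + k ≤ (x : ℕ)) → a x = b x then
      R (fun y => a ⟨m * (i : ℕ) + (y : ℕ), by
            have h1 : (i : ℕ) < n - 1 := i.isLt
            have h2 : m * (i : ℕ) ≤ m * (n - 2) := Nat.mul_le_mul_left m (by omega)
            have h3 := y.isLt
            omega⟩)
        (fun y => b ⟨m * (i : ℕ) + (y : ℕ), by
            have h1 : (i : ℕ) < n - 1 := i.isLt
            have h2 : m * (i : ℕ) ≤ m * (n - 2) := Nat.mul_le_mul_left m (by omega)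
            have h3 := y.isLt
            omega⟩)
    else 0

/-- `R` is a generalized Yang–Baxter operator of type `(d,k,m)`. -/
def IsGYB (d k m : ℕ) (R : MIM d k) : Prop :=
  IsUnit R ∧
  (Rop d k m 3 R 0 * Rop d k m 3 R 1 * Rop d k m 3 R 0 =
      Rop d k m 3 R 1 * Rop d k m 3 R 0 * Rop d k m 3 R 1) ∧
  ∀ j : ℕ, (hj : 4 ≤ j) →
    Rop d k m j R ⟨0, by omega⟩ * Rop d k m j R ⟨j - 2, by omega⟩ =
      Rop d k m j R ⟨j - 2, by omega⟩ * Rop d k m j R ⟨0, by omega⟩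

/-- Defining relations of the braid group `B_n` (zero-based generators). -/
def braidRels (n : ℕ) : Set (FreeGroup (Fin (n - 1))) :=
  { r | (∃ i j : Fin (n - 1), (i : ℕ) + 2 ≤ (j : ℕ) ∧
          r = FreeGroup.of i * FreeGroup.of j * (FreeGroup.of i)⁻¹ * (FreeGroup.of j)⁻¹) ∨
        (∃ i j : Fin (n - 1), (j : ℕ) = (i : ℕ) + 1 ∧
          r = FreeGroup.of i * FreeGroup.of j * FreeGroup.of i *
              (FreeGroup.of j * FreeGroup.of i * FreeGroup.of j)⁻¹) }

/-- The braid group `B_n` as a presented group. -/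
abbrev BraidGroup (n : ℕ) := PresentedGroup (braidRels n)

/-- Lexicographic identification of `(Fin 3 → Fin 2)` with `Fin 8`. -/
def emb (v : Fin 3 → Fin 2) : Fin 8 :=
  ⟨4 * (v 0 : ℕ) + 2 * (v 1 : ℕ) + (v 2 : ℕ), by
    have := (v 0).isLt; have := (v 1).isLt; have := (v 2).isLt; omega⟩

/-- View an `8×8` matrix as an endomorphism of `(ℂ²)^{⊗3}` via the
lexicographically ordered basis. -/
def ofMat8 (M : Matrix (Fin 8) (Fin 8) ℂ) : MIM 2 3 :=
  fun a b => M (emb a) (emb b)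

/-- The `(2,3,1)` operator of type I. -/
noncomputable def RI (θ : ℝ) : MIM 2 3 :=
  ofMat8 <| ((Real.sqrt 2 : ℂ))⁻¹ •
    (Matrix.reindex finSumFinEquiv finSumFinEquiv <| Matrix.fromBlocks
      !![1, 0, 1, 0;
         0, Complex.I, 0, Complex.exp (θ * Complex.I);
         -Complex.I, 0, Complex.I, 0;
         0, -Complex.I * Complex.exp (-θ * Complex.I), 0, 1] 0 0
      !![Complex.I, 0, Complex.exp (θ * Complex.I), 0;
         0, 1, 0, -Complex.exp (2 * θ * Complex.I);
         -Complex.I * Complex.exp (-θ * Complex.I), 0, 1, 0;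
         0, Complex.I * Complex.exp (-2 * θ * Complex.I), 0, Complex.I])

/-- The `(2,3,1)` operator of type II. -/
noncomputable def RII (θ : ℝ) : MIM 2 3 :=
  ofMat8 <| ((Real.sqrt 2 : ℂ))⁻¹ •
    (Matrix.reindex finSumFinEquiv finSumFinEquiv <| Matrix.fromBlocks
      !![1, 0, 1, 0;
         0, Complex.I, 0, Complex.exp (θ * Complex.I);
         -1, 0, 1, 0;
         0, Complex.exp (-θ * Complex.I), 0, Complex.I] 0 0
      !![Complex.I, 0, Complex.exp (θ * Complex.I), 0;
         0, 1, 0, -Complex.exp (2 * θ * Complex.I);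
         Complex.exp (-θ * Complex.I), 0, Complex.I, 0;
         0, Complex.exp (-2 * θ * Complex.I), 0, 1])

/-- The `(2,3,1)` operator of type III. -/
noncomputable def RIII (θ : ℝ) : MIM 2 3 :=
  ofMat8 <| ((Real.sqrt 2 : ℂ))⁻¹ •
    (Matrix.reindex finSumFinEquiv finSumFinEquiv <| Matrix.fromBlocks
      !![1, 0, 1, 0;
         0, 1, 0, Complex.exp (θ * Complex.I);
         -1, 0, 1, 0;
         0, -Complex.exp (-θ * Complex.I), 0, 1] 0 0
      !![1, 0, -Complex.exp (θ * Complex.I), 0;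
         0, 1, 0, -Complex.exp (2 * θ * Complex.I);
         Complex.exp (-θ * Complex.I), 0, 1, 0;
         0, Complex.exp (-2 * θ * Complex.I), 0, 1])

/-- The `4×4` antidiagonal matrix `J`. -/
def Jmat : Matrix (Fin 4) (Fin 4) ℂ :=
  !![0, 0, 0, 1;
     0, 0, 1, 0;
     0, 1, 0, 0;
     1, 0, 0, 0]

/-- The `(2,3,2)` operator of Rowell–Zhang–Wu–Ge. -/
noncomputable def R232 : MIM 2 3 :=
  ofMat8 <| ((Real.sqrt 2 : ℂ))⁻¹ •
    (Matrix.reindex finSumFinEquiv finSumFinEquiv <|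
      Matrix.fromBlocks 1 Jmat (-Jmat) 1)

lemma emb_bij : Function.Bijective emb := by decide

lemma ofMat8_mul (M N : Matrix (Fin 8) (Fin 8) ℂ) :
    ofMat8 M * ofMat8 N = ofMat8 (M * N) := by
  ext a b
  simp only [ofMat8, Matrix.mul_apply, HMul.hMul]
  exact Fintype.sum_bijective emb emb_bij _ _ (fun c => rfl)

lemma ofMat8_one : ofMat8 (1 : Matrix (Fin 8) (Fin 8) ℂ) = 1 := by
  ext a b
  simp [ofMat8, Matrix.one_apply, emb_bij.injective.eq_iff]

lemma ofMat8_smul (c : ℂ) (M : Matrix (Fin 8) (Fin 8) ℂ) :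
    ofMat8 (c • M) = c • ofMat8 M := rfl

lemma ofMat8_sub (M N : Matrix (Fin 8) (Fin 8) ℂ) :
    ofMat8 (M - N) = ofMat8 M - ofMat8 N := rfl

lemma Jmat_mul_Jmat : Jmat * Jmat = 1 := by
  ext i j
  fin_cases i <;> fin_cases j <;>
    simp [Jmat, Matrix.mul_apply, Fin.sum_univ_succ, Matrix.one_apply]

lemma sqrt2_ne : ((Real.sqrt 2 : ℝ) : ℂ) ≠ 0 := by
  norm_num [Real.sqrt_eq_zero']

lemma key : R232 * R232 = ((Real.sqrt 2 : ℝ) : ℂ) • R232 - 1 := by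
  rw [R232, ofMat8_mul, ← ofMat8_smul, ← ofMat8_one, ← ofMat8_sub]
  congr 1
  set t : ℂ := ((Real.sqrt 2 : ℝ) : ℂ) with ht
  have h2 : t * t = 2 := by
    rw [ht, ← Complex.ofReal_mul]
    norm_num [Real.mul_self_sqrt]
  set φ := Matrix.reindexAlgEquiv ℂ ℂ (finSumFinEquiv (m := 4) (n := 4)) with hφ
  have hr : ∀ M : Matrix (Fin 4 ⊕ Fin 4) (Fin 4 ⊕ Fin 4) ℂ,
      Matrix.reindex finSumFinEquiv finSumFinEquiv M = φ M := fun _ => rfl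
  rw [hr, ← map_smul φ, ← map_mul φ, ← map_one φ, ← map_smul φ, ← map_sub φ]
  congr 1
  rw [Matrix.smul_mul, Matrix.mul_smul, smul_smul, smul_smul, mul_inv_cancel₀ sqrt2_ne,
    one_smul, ← mul_inv, h2]
  have hPP : (Matrix.fromBlocks 1 Jmat (-Jmat) 1 : Matrix (Fin 4 ⊕ Fin 4) (Fin 4 ⊕ Fin 4) ℂ) *
      Matrix.fromBlocks 1 Jmat (-Jmat) 1 =
      Matrix.fromBlocks 0 ((2:ℂ) • Jmat) ((2:ℂ) • -Jmat) 0 := by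
    simp only [Matrix.fromBlocks_multiply, Matrix.one_mul, Matrix.mul_one,
      Matrix.neg_mul, Matrix.mul_neg, Jmat_mul_Jmat, smul_neg, two_smul]
    congr 1 <;> abel
  rw [hPP, ← Matrix.fromBlocks_one (l := Fin 4) (m := Fin 4) (α := ℂ),
    Matrix.fromBlocks_smul]
  have hsub : (Matrix.fromBlocks 1 Jmat (-Jmat) 1 : Matrix (Fin 4 ⊕ Fin 4) (Fin 4 ⊕ Fin 4) ℂ) -
      Matrix.fromBlocks 1 0 0 1 = Matrix.fromBlocks 0 Jmat (-Jmat) 0 := by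
    ext (i | i) (j | j) <;> simp [Matrix.fromBlocks]
  rw [hsub]
  congr 1 <;> simp [smul_smul]

def Emat : Matrix (Fin 8) (Fin 8) ℂ :=
  !![1,0,0,0, 0,0,0,1;
     0,1,0,0, 0,0,1,0;
     0,0,1,0, 0,1,0,0;
     0,0,0,1, 1,0,0,0;
     0,0,0,-1, 1,0,0,0;
     0,0,-1,0, 0,1,0,0;
     0,-1,0,0, 0,0,1,0;
     -1,0,0,0, 0,0,0,1]

lemma hE : (Matrix.reindex finSumFinEquiv finSumFinEquiv <|
    Matrix.fromBlocks 1 Jmat (-Jmat) 1) = Emat := by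
  ext i j
  fin_cases i <;> fin_cases j <;>
    norm_num [Matrix.reindex_apply, Matrix.submatrix_apply, finSumFinEquiv, Jmat,
      Matrix.fromBlocks, Matrix.one_apply, Emat, Fin.addCases, Fin.castLT, Fin.subNat,
      Fin.ext_iff]

lemma happ (i : Fin 1 → Fin 2) (l : Fin 2 → Fin 2) :
    Fin.append i l = ![i 0, l 0, l 1] := by
  funext x
  fin_cases x <;> simp [Fin.append, Fin.addCases, Fin.castLT, Fin.subNat]

lemma hsum (F : (Fin 2 → Fin 2) → ℂ) :
    ∑ l : Fin 2 → Fin 2, F l = F ![0,0] + F ![0,1] + F ![1,0] + F ![1,1] := by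
  rw [← (finTwoArrowEquiv (Fin 2)).symm.sum_comp F]
  simp [Fintype.sum_prod_type, Fin.sum_univ_two, finTwoArrowEquiv]
  ring

lemma hfun1 (v : Fin 1 → Fin 2) : v = ![v 0] := by
  funext x; fin_cases x; rfl

lemma h2 : ((Real.sqrt 2 : ℝ) : ℂ) * ((Real.sqrt 2 : ℝ) : ℂ) = 2 := by
  rw [← Complex.ofReal_mul]
  norm_num [Real.mul_self_sqrt]

lemma pTr_R : pTr 1 2 R232 = ((2 * Real.sqrt 2 : ℝ) : ℂ) • (1 : MIM 2 1) := by
  have hR : R232 = ofMat8 (((Real.sqrt 2 : ℝ) : ℂ)⁻¹ • Emat) := by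
    rw [R232, hE]
  ext i j
  rw [pTr, hR, hsum]
  rw [hfun1 i, hfun1 j]
  have hi : i 0 = 0 ∨ i 0 = 1 := by omega
  have hj : j 0 = 0 ∨ j 0 = 1 := by omega
  rcases hi with hi | hi <;> rcases hj with hj | hj <;> rw [hi, hj] <;>
    · simp only [happ, ofMat8, Matrix.smul_apply, smul_eq_mul, Matrix.one_apply,
        Matrix.smul_apply]
      simp only [emb, Matrix.cons_val_zero, Matrix.cons_val_one, Matrix.cons_val_two, Matrix.head_cons, Fin.isValue]
      norm_num [emb, Emat, Matrix.one_apply, Fin.ext_iff]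
      all_goals first
        | field_simp
          rw [sq, h2]
          norm_num
        | · rw [if_neg (by decide)]

lemma pTr_one3 : pTr 1 2 (1 : MIM 2 3) = (4:ℂ) • (1 : MIM 2 1) := by
  ext i j
  rw [pTr, hsum, hfun1 i, hfun1 j]
  have hi : i 0 = 0 ∨ i 0 = 1 := by omega
  have hj : j 0 = 0 ∨ j 0 = 1 := by omega
  rcases hi with hi | hi <;> rcases hj with hj | hj <;> rw [hi, hj] <;>
    norm_num [happ, Matrix.one_apply, funext_iff, Fin.forall_fin_succ, Fin.forall_fin_two]

lemma pTr_sub_smul (c : ℂ) (A B : MIM 2 3) :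
    pTr 1 2 (c • A - B) = c • pTr 1 2 A - pTr 1 2 B := by
  ext i j
  simp [pTr, Finset.sum_sub_distrib, Finset.mul_sum]

theorem stmt19 :
    IsUnit R232 ∧
    R232 + R232⁻¹ = (Real.sqrt 2 : ℂ) • (1 : MIM 2 3) ∧
    pTr 1 2 R232 = ((2 * Real.sqrt 2 : ℝ) : ℂ) • (1 : MIM 2 1) ∧
    pTr 1 2 (R232⁻¹) = ((2 * Real.sqrt 2 : ℝ) : ℂ) • (1 : MIM 2 1) := by
  set t : ℂ := ((Real.sqrt 2 : ℝ) : ℂ) with ht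
  have hright : R232 * (t • (1 : MIM 2 3) - R232) = 1 := by
    rw [Matrix.mul_sub, Matrix.mul_smul, mul_one, key, ← ht]
    abel
  have hleft : (t • (1 : MIM 2 3) - R232) * R232 = 1 := by
    rw [Matrix.sub_mul, Matrix.smul_mul, one_mul, key, ← ht]
    abel
  have hunit : IsUnit R232 := isUnit_iff_exists.mpr ⟨_, hright, hleft⟩
  have hinv : R232⁻¹ = t • (1 : MIM 2 3) - R232 := Matrix.inv_eq_right_inv hright
  refine ⟨hunit, ?_, pTr_R, ?_⟩
  · rw [hinv]
    show R232 + (t • 1 - R232) = t • 1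
    abel
  · rw [hinv, pTr_sub_smul, pTr_one3, pTr_R, smul_smul]
    ext i j
    simp only [Matrix.sub_apply, Matrix.smul_apply, smul_eq_mul]
    have : t * 4 - ((2 * Real.sqrt 2 : ℝ) : ℂ) = ((2 * Real.sqrt 2 : ℝ) : ℂ) := by
      rw [ht]; push_cast; ring
    rw [← sub_mul, this]
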